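/- Every (6,3)-configuration contains a double-diamond configuration as a substructure; consequently, every D-avoiding 4-cycle system is 3-sparse. -/

import Mathlib

open Finset

/-- The edge set of the 4-cycle `(a, b, c, d)`: edges {a,b}, {b,c}, {c,d}, {d,a}. -/
def cycEdges {V : Type*} [DecidableEq V] (a b c d : V) : Finset (Sym2 V) :=
  {s(a, b), s(b, c), s(c, d), s(d, a)}

/-- `E` is the edge set of a 4-cycle on four distinct vertices. -/
def IsFourCycle {V : Type*} [DecidableEq V] (E : Finset (Sym2 V)) : Prop :=
  ∃ a b c d : V, ([a, b, c, d] : List V).Nodup ∧ E = cycEdges a b c d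

/-- The set of vertices covered by a set of edges. -/
def edgeVerts {V : Type*} [DecidableEq V] (E : Finset (Sym2 V)) : Finset V :=
  E.sup (Sym2.lift ⟨fun x y => ({x, y} : Finset V), fun x y => Finset.pair_comm x y⟩)

/-- A `(k, l)`-configuration: a set of `l` pairwise edge-disjoint 4-cycles whose
union contains exactly `k` vertices. -/
def IsConfiguration {V : Type*} [DecidableEq V] (k l : ℕ)
    (D : Finset (Finset (Sym2 V))) : Prop :=
  D.card = l ∧ (∀ E ∈ D, IsFourCycle E) ∧
    (∀ E ∈ D, ∀ F ∈ D, E ≠ F → Disjoint E F) ∧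
    (D.sup edgeVerts).card = k

/-- `C` is a 4-cycle system: a collection of 4-cycles whose edge sets partition
the edge set of the complete graph on `V`. -/
def IsFourCycleSystem {V : Type*} [DecidableEq V] (C : Finset (Finset (Sym2 V))) : Prop :=
  (∀ E ∈ C, IsFourCycle E) ∧ ∀ e : Sym2 V, ¬ e.IsDiag → ∃! E, E ∈ C ∧ e ∈ E

/-- `C` is a 4-cycle packing: a set of pairwise edge-disjoint 4-cycles. -/
def IsFourCyclePacking {V : Type*} [DecidableEq V] (C : Finset (Finset (Sym2 V))) : Prop :=
  (∀ E ∈ C, IsFourCycle E) ∧ ∀ E ∈ C, ∀ F ∈ C, E ≠ F → Disjoint E F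

/-- `C` is `r`-sparse: it contains no `(j+3, j)`-configuration for `2 ≤ j ≤ r`. -/
def RSparse {V : Type*} [DecidableEq V] (r : ℕ) (C : Finset (Finset (Sym2 V))) : Prop :=
  ∀ j, 2 ≤ j → j ≤ r → ∀ D ⊆ C, ¬ IsConfiguration (j + 3) j D

/-- Two 4-cycles form a double-diamond: they are `(a,b,c,d)` and `(a,e,c,f)`,
sharing the diagonal {a,c}. -/
def IsDoubleDiamond {V : Type*} [DecidableEq V] (E F : Finset (Sym2 V)) : Prop :=
  ∃ a b c d e f : V, ([a, b, c, d, e, f] : List V).Nodup ∧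
    E = cycEdges a b c d ∧ F = cycEdges a e c f

/-- `C` is D-avoiding: no two of its 4-cycles form a double-diamond. -/
def DAvoiding {V : Type*} [DecidableEq V] (C : Finset (Finset (Sym2 V))) : Prop :=
  ∀ E ∈ C, ∀ F ∈ C, ¬ IsDoubleDiamond E F

/-- `C` is strictly `r`-sparse: `r`-sparse and D-avoiding. -/
def StrictlyRSparse {V : Type*} [DecidableEq V] (r : ℕ)
    (C : Finset (Finset (Sym2 V))) : Prop :=
  RSparse r C ∧ DAvoiding C

/-!
Two edge-disjoint 4-cycles share at most two vertices: a 4-cycle has two edges inside any three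
of its vertices, and three vertices span only three pairs. So in a `(6,3)`-configuration any two
of the three cycles meet in exactly a pair of vertices, these three pairs partition the six
vertices, and each cycle lives on the union of its two pairs `P ∪ Q`. Such a cycle contains `P`
as an edge iff it contains `Q` (both are edges or both are diagonals), and two cycles meeting in
a pair that is an edge of neither form a double-diamond. Without a double-diamond, every shared
pair is an edge of exactly one of its two cycles, and going once around the three cycles gives
a parity contradiction.
-/

section ThreeQuadruples

variable {α : Type*} [DecidableEq α] {A B C : Finset α}

lemma card_inter_eq_two_of_card_union_le_six (hA : #A = 4) (hB : #B = 4)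
    (hAB : #(A ∩ B) ≤ 2) (hU : #(A ∪ B ∪ C) ≤ 6) : #(A ∩ B) = 2 ∧ C ⊆ A ∪ B := by
  have h := card_union_add_card_inter A B
  have h' := card_le_card (subset_union_left : A ∪ B ⊆ A ∪ B ∪ C)
  have hAB_U : A ∪ B = A ∪ B ∪ C :=
    eq_of_subset_of_card_le subset_union_left (by omega)
  exact ⟨by omega, hAB_U ▸ subset_union_right⟩

lemma inter_inter_eq_empty_of_card_eq_two (hA : #A = 4) (hAB : #(A ∩ B) = 2)
    (hAC : #(A ∩ C) = 2) (hBC : A ⊆ B ∪ C) : A ∩ B ∩ C = ∅ := by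
  have hsplit : A ∩ B ∪ A ∩ C = A := by
    rw [← inter_union_distrib_left, inter_eq_left.mpr hBC]
  have h := card_union_add_card_inter (A ∩ B) (A ∩ C)
  rw [hsplit, hA, hAB, hAC, inter_inter_inter_comm, inter_self, ← inter_assoc] at h
  exact card_eq_zero.mp (by omega)

lemma exists_eq_of_card_inter_le_two (hA : #A = 4) (hB : #B = 4) (hC : #C = 4)
    (hU : #(A ∪ B ∪ C) ≤ 6) (hAB : #(A ∩ B) ≤ 2) (hAC : #(A ∩ C) ≤ 2)
    (hBC : #(B ∩ C) ≤ 2) :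
    ∃ x y u v z w, [x, y, u, v, z, w].Nodup ∧
      A ∩ B = {x, y} ∧ A ∩ C = {u, v} ∧ B ∩ C = {z, w} ∧
      A = {x, y, u, v} ∧ B = {x, y, z, w} ∧ C = {u, v, z, w} := by
  obtain ⟨hAB, hCAB⟩ := card_inter_eq_two_of_card_union_le_six hA hB hAB hU
  obtain ⟨hAC, hBAC⟩ := card_inter_eq_two_of_card_union_le_six (C := B) hA hC hAC
    (by rwa [union_right_comm])
  obtain ⟨hBC, hABC⟩ := card_inter_eq_two_of_card_union_le_six (C := A) hB hC hBC
    (by rwa [union_comm, ← union_assoc])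
  have hempty := inter_inter_eq_empty_of_card_eq_two hA hAB hAC hABC
  obtain ⟨x, y, hxy, hxy'⟩ := card_eq_two.mp hAB
  obtain ⟨u, v, huv, huv'⟩ := card_eq_two.mp hAC
  obtain ⟨z, w, hzw, hzw'⟩ := card_eq_two.mp hBC
  have hsplit {X Y Z : Finset α} (h : X ⊆ Y ∪ Z) : X = X ∩ Y ∪ X ∩ Z := by
    rw [← inter_union_distrib_left, inter_eq_left.mpr h]
  refine ⟨x, y, u, v, z, w, ?_, hxy', huv', hzw', ?_, ?_, ?_⟩
  · have hmem : ∀ t, t ∈ A ∩ B ∩ C → False := by simp [hempty]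
    have hx : x ∈ A ∩ B := by simp [hxy']
    have hy : y ∈ A ∩ B := by simp [hxy']
    have hu : u ∈ A ∩ C := by simp [huv']
    have hv : v ∈ A ∩ C := by simp [huv']
    have hz : z ∈ B ∩ C := by simp [hzw']
    have hw : w ∈ B ∩ C := by simp [hzw']
    simp only [mem_inter] at hmem hx hy hu hv hz hw
    simp only [List.nodup_cons, List.mem_cons, List.not_mem_nil, not_or]
    grind
  · rw [hsplit hABC, hxy', huv', insert_union, singleton_union]
  · rw [hsplit hBAC, inter_comm, hxy', hzw', insert_union, singleton_union]
  · rw [hsplit hCAB, inter_comm, inter_comm C, huv', hzw', insert_union, singleton_union]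

end ThreeQuadruples

section FourCycles

variable {V : Type*} [DecidableEq V] {E F : Finset (Sym2 V)} {x y u v : V}

lemma cycEdges_rotate (a b c d : V) : cycEdges b c d a = cycEdges a b c d := by
  ext e
  simp only [cycEdges, mem_insert, mem_singleton]
  tauto

lemma edgeVerts_cycEdges (a b c d : V) : edgeVerts (cycEdges a b c d) = {a, b, c, d} := by
  ext v
  simp [edgeVerts, cycEdges]
  tauto

namespace IsFourCycle

lemma card_edgeVerts (hE : IsFourCycle E) : #(edgeVerts E) = 4 := by
  obtain ⟨a, b, c, d, hn, rfl⟩ := hE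
  simpa [edgeVerts_cycEdges] using List.toFinset_card_of_nodup hn

lemma exists_eq_cycEdges_of_mem (hE : IsFourCycle E) (hx : x ∈ edgeVerts E) :
    ∃ b c d, [x, b, c, d].Nodup ∧ E = cycEdges x b c d := by
  obtain ⟨a, b, c, d, hn, rfl⟩ := hE
  have hn' : [b, c, d, a].Nodup := (List.nodup_rotate (n := 1)).mpr hn
  have hn'' : [c, d, a, b].Nodup := (List.nodup_rotate (n := 2)).mpr hn
  have hn''' : [d, a, b, c].Nodup := (List.nodup_rotate (n := 3)).mpr hn
  rw [edgeVerts_cycEdges] at hx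
  simp only [mem_insert, mem_singleton] at hx
  rcases hx with rfl | rfl | rfl | rfl
  · exact ⟨b, c, d, hn, rfl⟩
  · exact ⟨c, d, a, hn', (cycEdges_rotate ..).symm⟩
  · exact ⟨d, a, b, hn'', by rw [cycEdges_rotate, cycEdges_rotate]⟩
  · exact ⟨a, b, c, hn''', by rw [cycEdges_rotate]⟩

lemma exists_eq_cycEdges_of_notMem (hE : IsFourCycle E) (hx : x ∈ edgeVerts E)
    (hy : y ∈ edgeVerts E) (hxy : x ≠ y) (h : s(x, y) ∉ E) :
    ∃ p q, [x, p, y, q].Nodup ∧ E = cycEdges x p y q := by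
  obtain ⟨b, c, d, hn, rfl⟩ := hE.exists_eq_cycEdges_of_mem hx
  rw [edgeVerts_cycEdges] at hy
  simp only [mem_insert, mem_singleton] at hy
  rcases hy with rfl | rfl | rfl | rfl
  · exact absurd rfl hxy
  · simp [cycEdges] at h
  · exact ⟨b, d, hn, rfl⟩
  · simp [cycEdges] at h

lemma two_le_card_inter_image_offDiag (hE : IsFourCycle E) {S : Finset V}
    (hS : S ⊆ edgeVerts E) (h3 : #S = 3) : 2 ≤ #(E ∩ S.offDiag.image Sym2.mk.uncurry) := by
  obtain ⟨w, hwE, hwS⟩ := exists_mem_notMem_of_card_lt_card (s := S) (t := edgeVerts E)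
    (by rw [hE.card_edgeVerts, h3]; norm_num)
  obtain ⟨b, c, d, hn, rfl⟩ := hE.exists_eq_cycEdges_of_mem hwE
  have hSbcd : S ⊆ {b, c, d} := fun v hv ↦ by
    have := hS hv
    rw [edgeVerts_cycEdges, mem_insert] at this
    exact this.resolve_left (by rintro rfl; exact hwS hv)
  have hS' : S = {b, c, d} := eq_of_subset_of_card_le hSbcd (h3 ▸ card_le_three)
  simp only [List.nodup_cons, List.mem_cons, not_or] at hn
  have hmem : ∀ p q, p ∈ S → q ∈ S → p ≠ q →
      s(p, q) ∈ S.offDiag.image Sym2.mk.uncurry :=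
    fun p q hp hq hpq ↦ mem_image_of_mem _ (mem_offDiag.mpr ⟨hp, hq, hpq⟩)
  calc 2 = #{s(b, c), s(c, d)} := by
        rw [card_pair]; simp; tauto
    _ ≤ _ := by
      refine card_le_card fun e he ↦ ?_
      simp only [mem_insert, mem_singleton] at he
      rcases he with rfl | rfl <;>
        refine mem_inter.mpr ⟨by simp [cycEdges], hmem _ _ ?_ ?_ ?_⟩ <;> simp [hS'] <;> tauto

lemma card_edgeVerts_inter_le_two (hE : IsFourCycle E) (hF : IsFourCycle F)
    (hd : Disjoint E F) : #(edgeVerts E ∩ edgeVerts F) ≤ 2 := by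
  by_contra! h
  obtain ⟨S, hS, h3⟩ := exists_subset_card_eq (n := 3) h
  set T := S.offDiag.image Sym2.mk.uncurry
  have hE2 : 2 ≤ #(E ∩ T) := hE.two_le_card_inter_image_offDiag (hS.trans inter_subset_left) h3
  have hF2 : 2 ≤ #(F ∩ T) := hF.two_le_card_inter_image_offDiag (hS.trans inter_subset_right) h3
  have hdT : Disjoint (E ∩ T) (F ∩ T) := hd.mono inter_subset_left inter_subset_left
  have : #(E ∩ T) + #(F ∩ T) ≤ 3 := calc
    _ = #((E ∩ T) ∪ (F ∩ T)) := (card_union_of_disjoint hdT).symm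
    _ ≤ #T := card_le_card (union_subset inter_subset_right inter_subset_right)
    _ = 3 := by rw [Sym2.card_image_offDiag, h3]; rfl
  omega

lemma notMem_of_notMem_of_edgeVerts_eq (hE : IsFourCycle E)
    (hV : edgeVerts E = {x, y, u, v}) (hn : [x, y, u, v].Nodup) (h : s(x, y) ∉ E) :
    s(u, v) ∉ E := by
  simp only [List.nodup_cons, List.mem_cons, not_or] at hn
  obtain ⟨p, q, hpq, rfl⟩ :=
    hE.exists_eq_cycEdges_of_notMem (by simp [hV]) (by simp [hV]) hn.1.1 h
  rw [edgeVerts_cycEdges] at hV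
  have hu : u ∈ ({x, p, y, q} : Finset V) := by simp [hV]
  have hv : v ∈ ({x, p, y, q} : Finset V) := by simp [hV]
  simp only [List.nodup_cons, List.mem_cons, not_or] at hpq
  simp only [mem_insert, mem_singleton] at hu hv
  simp only [cycEdges, mem_insert, mem_singleton, Sym2.eq_iff]
  grind

lemma mem_iff_mem_of_edgeVerts_eq (hE : IsFourCycle E)
    (hV : edgeVerts E = {x, y, u, v}) (hn : [x, y, u, v].Nodup) :
    s(x, y) ∈ E ↔ s(u, v) ∈ E := by
  refine ⟨not_imp_not.mp (hE.notMem_of_notMem_of_edgeVerts_eq ?_ ?_),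
    not_imp_not.mp (hE.notMem_of_notMem_of_edgeVerts_eq hV hn)⟩
  · rw [hV]; ext; simp only [mem_insert, mem_singleton]; tauto
  · exact (List.perm_append_comm (l₁ := [x, y]) (l₂ := [u, v])).nodup_iff.mp hn

end IsFourCycle

lemma isDoubleDiamond_of_edgeVerts_inter_eq (hE : IsFourCycle E) (hF : IsFourCycle F)
    (hxy : x ≠ y) (hEF : edgeVerts E ∩ edgeVerts F = {x, y}) (hxE : s(x, y) ∉ E)
    (hxF : s(x, y) ∉ F) : IsDoubleDiamond E F := by
  have hx : x ∈ edgeVerts E ∩ edgeVerts F := by simp [hEF]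
  have hy : y ∈ edgeVerts E ∩ edgeVerts F := by simp [hEF]
  rw [mem_inter] at hx hy
  obtain ⟨p, q, hpq, rfl⟩ := hE.exists_eq_cycEdges_of_notMem hx.1 hy.1 hxy hxE
  obtain ⟨r, w, hrw, rfl⟩ := hF.exists_eq_cycEdges_of_notMem hx.2 hy.2 hxy hxF
  refine ⟨x, p, y, q, r, w, ?_, rfl, rfl⟩
  rw [edgeVerts_cycEdges, edgeVerts_cycEdges] at hEF
  have hshared : ∀ a ∈ ({x, p, y, q} : Finset V), a ∈ ({x, r, y, w} : Finset V) →
      a = x ∨ a = y :=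
    fun a h₁ h₂ ↦ by simpa [hEF] using mem_inter.mpr ⟨h₁, h₂⟩
  have hp := hshared p (by simp)
  have hq := hshared q (by simp)
  simp only [mem_insert, mem_singleton] at hp hq
  simp only [List.nodup_cons, List.mem_cons, List.not_mem_nil, not_or] at hpq hrw ⊢
  grind

lemma IsFourCycle.mem_iff_notMem_of_not_isDoubleDiamond (hE : IsFourCycle E)
    (hF : IsFourCycle F) (hd : Disjoint E F) (hxy : x ≠ y)
    (hEF : edgeVerts E ∩ edgeVerts F = {x, y}) (hno : ¬IsDoubleDiamond E F) :
    s(x, y) ∈ E ↔ s(x, y) ∉ F :=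
  ⟨fun hxE hxF ↦ disjoint_left.mp hd hxE hxF, fun hxF ↦ by_contra fun hxE ↦
    hno (isDoubleDiamond_of_edgeVerts_inter_eq hE hF hxy hEF hxE hxF)⟩

theorem IsConfiguration.exists_isDoubleDiamond {A : Finset (Finset (Sym2 V))}
    (hA : IsConfiguration 6 3 A) : ∃ E ∈ A, ∃ F ∈ A, IsDoubleDiamond E F := by
  obtain ⟨hcard, hcyc, hdisj, hverts⟩ := hA
  obtain ⟨E₁, E₂, E₃, h₁₂, h₁₃, h₂₃, rfl⟩ := card_eq_three.mp hcard
  have hE₁ := hcyc E₁ (by simp)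
  have hE₂ := hcyc E₂ (by simp)
  have hE₃ := hcyc E₃ (by simp)
  have hd₁₂ := hdisj E₁ (by simp) E₂ (by simp) h₁₂
  have hd₁₃ := hdisj E₁ (by simp) E₃ (by simp) h₁₃
  have hd₂₃ := hdisj E₂ (by simp) E₃ (by simp) h₂₃
  rw [sup_insert, sup_insert, sup_singleton, sup_eq_union, sup_eq_union, ← union_assoc]
    at hverts
  obtain ⟨x, y, u, v, z, w, hn, h₁₂', h₁₃', h₂₃', hV₁, hV₂, hV₃⟩ :=
    exists_eq_of_card_inter_le_two hE₁.card_edgeVerts hE₂.card_edgeVerts hE₃.card_edgeVerts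
      hverts.le (hE₁.card_edgeVerts_inter_le_two hE₂ hd₁₂)
      (hE₁.card_edgeVerts_inter_le_two hE₃ hd₁₃)
      (hE₂.card_edgeVerts_inter_le_two hE₃ hd₂₃)
  have c₁ := hE₁.mem_iff_mem_of_edgeVerts_eq hV₁ (hn.sublist (by simp))
  have c₂ := hE₂.mem_iff_mem_of_edgeVerts_eq hV₂ (hn.sublist (by simp))
  have c₃ := hE₃.mem_iff_mem_of_edgeVerts_eq hV₃ (hn.sublist (by simp))
  have hxy : x ≠ y := by rintro rfl; simp at hn
  have huv : u ≠ v := by rintro rfl; simp at hn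
  have hzw : z ≠ w := by rintro rfl; simp at hn
  by_contra! hno
  have d₁₂ := hE₁.mem_iff_notMem_of_not_isDoubleDiamond hE₂ hd₁₂ hxy h₁₂'
    (hno _ (by simp) _ (by simp))
  have d₁₃ := hE₁.mem_iff_notMem_of_not_isDoubleDiamond hE₃ hd₁₃ huv h₁₃'
    (hno _ (by simp) _ (by simp))
  have d₂₃ := hE₂.mem_iff_notMem_of_not_isDoubleDiamond hE₃ hd₂₃ hzw h₂₃'
    (hno _ (by simp) _ (by simp))
  tauto

lemma not_isConfiguration_five_two (D : Finset (Finset (Sym2 V))) :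
    ¬IsConfiguration 5 2 D := by
  rintro ⟨hcard, hcyc, hdisj, hverts⟩
  obtain ⟨E, F, hEF, rfl⟩ := card_eq_two.mp hcard
  have hE := hcyc E (by simp)
  have hF := hcyc F (by simp)
  rw [sup_insert, sup_singleton, sup_eq_union] at hverts
  have := card_union_add_card_inter (edgeVerts E) (edgeVerts F)
  have := hE.card_edgeVerts_inter_le_two hF (hdisj E (by simp) F (by simp) hEF)
  have := hE.card_edgeVerts
  have := hF.card_edgeVerts
  omega

lemma DAvoiding.rSparse_three {C : Finset (Finset (Sym2 V))} (hC : DAvoiding C) :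
    RSparse 3 C := by
  intro j hj₂ hj₃ D hDC hD
  interval_cases j
  · exact not_isConfiguration_five_two D hD
  · obtain ⟨E, hE, F, hF, hEF⟩ := hD.exists_isDoubleDiamond
    exact hC E (hDC hE) F (hDC hF) hEF

end FourCycles

/-- Every `(6,3)`-configuration contains a double-diamond; consequently every
D-avoiding 4-cycle system is 3-sparse. -/
theorem six_three_contains_double_diamond {V : Type*} [DecidableEq V] :
    (∀ A : Finset (Finset (Sym2 V)), IsConfiguration 6 3 A →
      ∃ E ∈ A, ∃ F ∈ A, IsDoubleDiamond E F) ∧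
    (∀ C : Finset (Finset (Sym2 V)), IsFourCycleSystem C → DAvoiding C → RSparse 3 C) :=
  ⟨fun _ hA ↦ hA.exists_isDoubleDiamond, fun _ _ hC ↦ hC.rSparse_three⟩
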